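/- arXiv:1303.5264 — 4 statements merged into one kernel-verified Lean document; each statement's English description precedes it below -/
import Mathlib

section
/- Let r be a rational number with 0 < r < 1. Then the following are equivalent: (i) there exist coprime integers A, M with 0 < A < M and a bijection assigning the three numbers 1/3, 1/5, r to the three numbers 1/M, A/M, (M−A)/M such that each of 1/3, 1/5, r is strictly less than its assigned value; (ii) r < 1/2. -/
/-!
If `r` is matched with `1/M` then `r < 1/M ≤ 1/2`. Otherwise `r` is matched with `B/M` and
`1/3, 1/5` with `1/M, C/M`, where `B + C = M`; sorting both pairs gives `1/5 < 1/M` and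
`1/3 < C/M`, i.e. `M ≤ 4` and `M < 3C`, which for integers forces `M ≤ 2C`, so
`r < B/M ≤ 1/2`. Conversely `A = 1`, `M = 2` makes all three targets `1/2`.
-/

open Equiv

theorem Equiv.Perm.fin_three_cases (σ : Perm (Fin 3)) :
    σ 2 = 0 ∨ σ 2 = 1 ∧ (σ 0 = 0 ∧ σ 1 = 2 ∨ σ 0 = 2 ∧ σ 1 = 0) ∨
      σ 2 = 2 ∧ (σ 0 = 0 ∧ σ 1 = 1 ∨ σ 0 = 1 ∧ σ 1 = 0) := by
  revert σ
  decide

theorem lt_and_lt_of_matched {α : Type*} [LinearOrder α] {a b x y : α} (hba : b ≤ a)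
    (hxy : x ≤ y) (h : a < x ∧ b < y ∨ a < y ∧ b < x) : b < x ∧ a < y := by
  rcases h with ⟨hax, -⟩ | ⟨hay, hbx⟩
  · exact ⟨hba.trans_lt hax, hax.trans_le hxy⟩
  · exact ⟨hbx, hay⟩

theorem le_two_mul_of_div_bounds {M C : ℤ} (hM : 0 < M) (h5 : (1 : ℚ) / 5 < 1 / M)
    (h3 : (1 : ℚ) / 3 < C / M) : M ≤ 2 * C := by
  have hMq : (0 : ℚ) < M := by exact_mod_cast hM
  have hM5 : M < 5 := by
    have : (M : ℚ) < 5 := (one_div_lt_one_div (by norm_num) hMq).mp h5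
    exact_mod_cast this
  have hM3C : M < 3 * C := by
    have : (M : ℚ) < 3 * C := by
      rw [div_lt_div_iff₀ (by norm_num) hMq] at h3
      linarith
    exact_mod_cast this
  omega

theorem lt_half_of_matched {r : ℚ} {M B C : ℤ} (hBC : B + C = M) (hM : 0 < M) (hC : 0 < C)
    (hr : r < B / M)
    (h : (1 : ℚ) / 3 < 1 / M ∧ (1 : ℚ) / 5 < C / M ∨ (1 : ℚ) / 3 < C / M ∧ (1 : ℚ) / 5 < 1 / M) :
    r < 1 / 2 := by
  have hMq : (0 : ℚ) < M := by exact_mod_cast hM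
  have h1C : (1 : ℚ) / M ≤ C / M := by
    gcongr
    exact_mod_cast hC
  obtain ⟨h5, h3⟩ := lt_and_lt_of_matched (by norm_num) h1C h
  have hMC : (M : ℚ) ≤ 2 * C := by exact_mod_cast le_two_mul_of_div_bounds hM h5 h3
  have hB : (B : ℚ) = M - C := by rw [← hBC]; push_cast; ring
  calc r < B / M := hr
    _ ≤ 1 / 2 := by rw [hB, div_le_iff₀ hMq]; linarith

theorem jn_criterion_multiplicity_two_general (r : ℚ) :
    (∃ A M : ℤ, 0 < A ∧ A < M ∧ IsCoprime A M ∧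
      ∃ σ : Equiv.Perm (Fin 3),
        ∀ i : Fin 3,
          (![(1 : ℚ) / 3, 1 / 5, r]) i <
            (![(1 : ℚ) / M, (A : ℚ) / M, ((M : ℚ) - A) / M]) (σ i)) ↔ r < 1 / 2 := by
  constructor
  · rintro ⟨A, M, hA, hAM, -, σ, hσ⟩
    have h0 := hσ 0
    have h1 := hσ 1
    have h2 := hσ 2
    simp only [Matrix.cons_val_zero, Matrix.cons_val_one, Matrix.cons_val_two] at h0 h1 h2
    rcases σ.fin_three_cases with hσ2 | ⟨hσ2, hσ01⟩ | ⟨hσ2, hσ01⟩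
    · have hM2 : (2 : ℚ) ≤ M := by exact_mod_cast (by omega : (2 : ℤ) ≤ M)
      rw [hσ2] at h2
      calc r < 1 / M := h2
        _ ≤ 1 / 2 := one_div_le_one_div_of_le two_pos hM2
    · rw [hσ2] at h2
      refine lt_half_of_matched (C := M - A) (by ring) (by omega) (by omega) h2 ?_
      push_cast
      rcases hσ01 with ⟨h0', h1'⟩ | ⟨h0', h1'⟩ <;> simp_all
    · rw [hσ2] at h2
      refine lt_half_of_matched (B := M - A) (C := A) (by ring) (by omega) hA ?_ ?_
      · push_cast; exact h2
      rcases hσ01 with ⟨h0', h1'⟩ | ⟨h0', h1'⟩ <;> simp_all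
  · intro hr
    refine ⟨1, 2, one_pos, one_lt_two, isCoprime_one_left, Equiv.refl _, ?_⟩
    intro i
    fin_cases i <;> norm_num [hr]

theorem jn_criterion_multiplicity_two (r : ℚ) (hr0 : 0 < r) (hr1 : r < 1) :
    (∃ A M : ℤ, 0 < A ∧ A < M ∧ IsCoprime A M ∧
      ∃ σ : Equiv.Perm (Fin 3),
        ∀ i : Fin 3,
          (![(1 : ℚ) / 3, 1 / 5, r]) i <
            (![(1 : ℚ) / M, (A : ℚ) / M, ((M : ℚ) - A) / M]) (σ i)) ↔ r < 1 / 2 :=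
  jn_criterion_multiplicity_two_general r
end

section
/- Let r be a rational number with 0 < r < 1. Then the following are equivalent: (i) there exist coprime integers A, M with 0 < A < M and a bijection assigning the three numbers 1/2, 1/3, r to the three numbers 1/M, A/M, (M−A)/M such that each of 1/2, 1/3, r is strictly less than its assigned value; (ii) r < 1/5. -/
/-! The three targets have numerators `1, A, M - A` over `M`: positive integers summing to
`M + 1`. If `1/2` and `1/3` sit strictly below two of them, integrality gives `M + 1 ≤ 2a` and
`M + 1 ≤ 3b`, so the third numerator `c = M + 1 - a - b` satisfies `6c ≤ M + 1`, hence
`5c ≤ M` as `c ≥ 1`; thus `r < c / M ≤ 1/5`. Conversely `(A, M) = (2, 5)` realises every `r < 1/5`. -/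

open Equiv

lemma five_mul_le_of_add_add_eq {M a b c : ℤ} (hsum : a + b + c = M + 1) (ha : M < 2 * a)
    (hb : M < 3 * b) (hc : 0 < c) : 5 * c ≤ M := by
  omega

lemma lt_one_fifth_of_lt_comp_perm {M : ℤ} {c : Fin 3 → ℤ} (hc : ∀ j, 0 < c j)
    (hsum : ∑ j, c j = M + 1) (σ : Perm (Fin 3)) {r : ℚ}
    (h : ∀ i, ![(1 : ℚ) / 2, 1 / 3, r] i < c (σ i) / M) : r < 1 / 5 := by
  have hsumσ : c (σ 0) + c (σ 1) + c (σ 2) = M + 1 := by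
    rw [← hsum, ← Equiv.sum_comp σ c, Fin.sum_univ_three]
  have hM : (0 : ℚ) < M := by
    have := hc (σ 0); have := hc (σ 1); have := hc (σ 2)
    exact_mod_cast (by omega : (0 : ℤ) < M)
  have h0 : M < 2 * c (σ 0) := by
    have := h 0
    simp only [Matrix.cons_val_zero, lt_div_iff₀ hM] at this
    exact_mod_cast (by linarith : (M : ℚ) < 2 * c (σ 0))
  have h1 : M < 3 * c (σ 1) := by
    have := h 1
    simp only [Matrix.cons_val_one, Matrix.cons_val_zero, lt_div_iff₀ hM] at this
    exact_mod_cast (by linarith : (M : ℚ) < 3 * c (σ 1))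
  have h5 : (5 * c (σ 2) : ℚ) ≤ M := by
    exact_mod_cast five_mul_le_of_add_add_eq hsumσ h0 h1 (hc (σ 2))
  calc r < c (σ 2) / M := by simpa using h 2
    _ ≤ 1 / 5 := by rw [div_le_div_iff₀ hM (by norm_num)]; linarith

lemma vec_div_eq_cast_div (A M : ℤ) :
    ![(1 : ℚ) / M, (A : ℚ) / M, ((M : ℚ) - A) / M] = fun j => (![1, A, M - A] j : ℚ) / M := by
  ext j; fin_cases j <;> simp

theorem jn_criterion_multiplicity_five_general (r : ℚ) :
    (∃ A M : ℤ, 0 < A ∧ A < M ∧ IsCoprime A M ∧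
      ∃ σ : Equiv.Perm (Fin 3),
        ∀ i : Fin 3,
          (![(1 : ℚ) / 2, 1 / 3, r]) i <
            (![(1 : ℚ) / M, (A : ℚ) / M, ((M : ℚ) - A) / M]) (σ i)) ↔ r < 1 / 5 := by
  constructor
  · rintro ⟨A, M, hA, hAM, -, σ, hσ⟩
    have hpos : ∀ j, 0 < ![1, A, M - A] j := by
      intro j; fin_cases j <;> simp <;> omega
    have hsum : ∑ j, ![1, A, M - A] j = M + 1 := by
      simp [Fin.sum_univ_three]; ring
    rw [vec_div_eq_cast_div] at hσ
    exact lt_one_fifth_of_lt_comp_perm hpos hsum σ hσ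
  · intro hr
    refine ⟨2, 5, by norm_num, by norm_num, ⟨-2, 1, by norm_num⟩, swap 0 2, fun i => ?_⟩
    fin_cases i <;> simp [swap_apply_of_ne_of_ne] <;> norm_num [hr]

theorem jn_criterion_multiplicity_five (r : ℚ) (hr0 : 0 < r) (hr1 : r < 1) :
    (∃ A M : ℤ, 0 < A ∧ A < M ∧ IsCoprime A M ∧
      ∃ σ : Equiv.Perm (Fin 3),
        ∀ i : Fin 3,
          (![(1 : ℚ) / 2, 1 / 3, r]) i <
            (![(1 : ℚ) / M, (A : ℚ) / M, ((M : ℚ) - A) / M]) (σ i)) ↔ r < 1 / 5 :=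
  jn_criterion_multiplicity_five_general r
end

section
/- Let r be any rational number. Then there do not exist coprime integers A, M with 0 < A < M together with a permutation (A₁, A₂, A₃, A₄) of the quadruple (A, M−A, 1, 1) such that 1/2 < A₁/M, 1/3 < A₂/M, 1/5 < A₃/M, and r < A₄/M. -/
theorem jn_no_foliation_regular_fibre (r : ℚ) :
    ¬ ∃ A M : ℤ, 0 < A ∧ A < M ∧ IsCoprime A M ∧
      ∃ σ : Equiv.Perm (Fin 4),
        ∀ i : Fin 4,
          (![(1 : ℚ) / 2, 1 / 3, 1 / 5, r]) i <
            ((![(A : ℚ), (M : ℚ) - A, 1, 1]) (σ i)) / M := by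
  rintro ⟨A, M, hA, hAM, -, σ, h⟩
  have hM : (0:ℚ) < (M:ℚ) := by exact_mod_cast hA.trans hAM
  have hcast : ∀ i : Fin 4, (![(A : ℚ), (M : ℚ) - A, 1, 1]) i
      = (((![A, M - A, 1, 1] : Fin 4 → ℤ) i : ℤ) : ℚ) := by
    intro i; fin_cases i <;> push_cast <;> simp
  have key : ∀ (n X : ℤ), 0 < n → (1:ℚ)/(n:ℚ) < (X:ℚ)/(M:ℚ) → M < n * X := by
    intro n X hn hlt
    have hn' : (0:ℚ) < (n:ℚ) := by exact_mod_cast hn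
    rw [div_lt_div_iff₀ hn' hM] at hlt
    have : (M:ℚ) < n * X := by push_cast; linarith
    exact_mod_cast this
  have H0 : M < 2 * (![A, M - A, 1, 1] : Fin 4 → ℤ) (σ 0) := by
    apply key 2 _ (by norm_num)
    have := h 0
    rw [hcast] at this
    simpa using this
  have H1 : M < 3 * (![A, M - A, 1, 1] : Fin 4 → ℤ) (σ 1) := by
    apply key 3 _ (by norm_num)
    have := h 1
    rw [hcast] at this
    simpa using this
  have H2 : M < 5 * (![A, M - A, 1, 1] : Fin 4 → ℤ) (σ 2) := by
    apply key 5 _ (by norm_num)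
    have := h 2
    rw [hcast] at this
    simpa using this
  have hfin : ∀ i : Fin 4, i = 0 ∨ i = 1 ∨ i = 2 ∨ i = 3 := by decide
  rcases hfin (σ 0) with e0|e0|e0|e0 <;> rcases hfin (σ 1) with e1|e1|e1|e1 <;>
    rcases hfin (σ 2) with e2|e2|e2|e2 <;>
    first
      | exact absurd (σ.injective (e0.trans e1.symm)) (by decide)
      | exact absurd (σ.injective (e0.trans e2.symm)) (by decide)
      | exact absurd (σ.injective (e1.trans e2.symm)) (by decide)
      | (rw [e0] at H0; rw [e1] at H1; rw [e2] at H2;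
         simp only [Matrix.cons_val_zero, Matrix.cons_val_one, Matrix.head_cons,
           Matrix.cons_val_two, Matrix.tail_cons, Matrix.cons_val_three] at H0 H1 H2;
         omega)
end

section
/- Let s be any rational number. Then there do not exist coprime integers A, M with 0 < A < M together with a permutation (A₁, A₂, A₃, A₄) of the quadruple (A, M−A, 1, 1) such that 1/2 < A₁/M, 2/3 < A₂/M, 4/5 < A₃/M, and s < A₄/M. -/
theorem jn_no_foliation_regular_fibre' (s : ℚ) :
    ¬ ∃ A M : ℤ, 0 < A ∧ A < M ∧ IsCoprime A M ∧
      ∃ σ : Equiv.Perm (Fin 4),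
        ∀ i : Fin 4,
          (![(1 : ℚ) / 2, 2 / 3, 4 / 5, s]) i <
            ((![(A : ℚ), (M : ℚ) - A, 1, 1]) (σ i)) / M := by
  rintro ⟨A, M, hA, hAM, -, σ, h⟩
  have hM2 : (2:ℤ) ≤ M := by omega
  have hMQ : (2:ℚ) ≤ (M:ℚ) := by exact_mod_cast hM2
  have hMpos : (0:ℚ) < (M:ℚ) := by linarith
  have h0 := h 0
  have h1 := h 1
  have h2 := h 2
  simp only [Matrix.cons_val_zero, Matrix.cons_val_one, Matrix.head_cons,
    Matrix.cons_val_two, Matrix.tail_cons] at h0 h1 h2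
  have hone : (1:ℚ)/(M:ℚ) ≤ 1/2 := by
    rw [div_le_div_iff₀ hMpos (by norm_num)]; linarith
  have key : ∀ i : Fin 4,
      (1:ℚ)/2 < (![(A : ℚ), (M : ℚ) - A, 1, 1]) (σ i) / M → (σ i).val < 2 := by
    intro i hi
    obtain ⟨a, ha⟩ : ∃ a, σ i = a := ⟨_, rfl⟩
    rw [ha] at hi ⊢
    fin_cases a <;> simp_all <;> linarith
  have k0 := key 0 h0
  have k1 := key 1 (by linarith)
  have k2 := key 2 (by linarith)
  have e01 : (σ 0).val ≠ (σ 1).val := fun e => by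
    have : (0 : Fin 4) = 1 := σ.injective (Fin.ext e)
    simp at this
  have e02 : (σ 0).val ≠ (σ 2).val := fun e => by
    have : (0 : Fin 4) = 2 := σ.injective (Fin.ext e)
    simp [Fin.ext_iff] at this
  have e12 : (σ 1).val ≠ (σ 2).val := fun e => by
    have : (1 : Fin 4) = 2 := σ.injective (Fin.ext e)
    simp [Fin.ext_iff] at this
  omega
end
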